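/- Let f : ℝ^d → ℝ be twice continuously differentiable with L1-Lipschitz gradient and L2-Lipschitz Hessian, let ε₁, ε₂ > 0, and let x₀ satisfy f(x₀) − inf f ≤ Δ < ∞. Suppose x₁ = x₀ and (v_j) are unit vectors such that for every j: (i) λ_min(∇²f(x_j)) ≥ v_jᵀ∇²f(x_j)v_j − max(ε₂, ‖∇f(x_j)‖)/2 and v_jᵀ∇²f(x_j)v_j ≤ 0; (ii) x_{j+1} = x_j − (2·|v_jᵀ∇²f(x_j)v_j|/L2)·sign(v_jᵀ∇f(x_j))·v_j if 2·|v_jᵀ∇²f(x_j)v_j|³/(3·L2²) > ‖∇f(x_j)‖²/(2·L1), and x_{j+1} = x_j − (1/L1)·∇f(x_j) otherwise. Then the first index j* such that v_{j*}ᵀ∇²f(x_{j*})v_{j*} > −ε₂/2 and ‖∇f(x_{j*})‖ ≤ ε₁ satisfies j* ≤ 1 + max(12·L2²/ε₂³, 2·L1/ε₁²)·(f(x₁) − f(x_{j*})) ≤ 1 + max(12·L2²/ε₂³, 2·L1/ε₁²)·Δ, and at termination ‖∇f(x_{j*})‖ ≤ ε₁ and λ_min(∇²f(x_{j*})) ≥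 −max(ε₂, ε₁). -/

import Mathlib

open scoped RealInnerProductSpace

noncomputable def sgn (t : ℝ) : ℝ := if 0 ≤ t then 1 else -1

/-!
Each iteration is controlled by a Taylor bound: the descent lemma
`f (x + h) ≤ f x + ⟪∇f x, h⟫ + L1 / 2 ‖h‖²` for the gradient step, and the cubic bound
`f (x + h) ≤ f x + ⟪∇f x, h⟫ + ⟪∇²f x h, h⟫ / 2 + L2 / 6 ‖h‖³` for the step along `±v`, whose
sign makes the first-order term nonpositive. Taking the better step, an iteration decreases `f` by
at least `max (2 |vᵀ∇²f v|³ / (3 L2²)) (‖∇f‖² / (2 L1))`, which is at least `1 / M` with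
`M = max (12 L2² / ε₂³) (2 L1 / ε₁²)` while the stopping test fails. Telescoping gives
`j ≤ 1 + M (f x₁ - f x_j) ≤ 1 + M Δ` up to the first stop, so the test does succeed, and there
the eigenvalue bound is read off the approximate minimality of `v`.
-/

open Set

theorem sgn_mul_self (t : ℝ) : sgn t * t = |t| := by
  unfold sgn
  split_ifs with h
  · rw [abs_of_nonneg h, one_mul]
  · rw [abs_of_neg (not_le.1 h), neg_one_mul]

theorem sq_sgn (t : ℝ) : sgn t ^ 2 = 1 := by
  unfold sgn; split_ifs <;> norm_num

theorem abs_sgn (t : ℝ) : |sgn t| = 1 := by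
  unfold sgn; split_ifs <;> norm_num

section Taylor

variable {E F : Type*} [NormedAddCommGroup E] [NormedSpace ℝ E]
  [NormedAddCommGroup F] [NormedSpace ℝ F]

theorem hasDerivAt_comp_add_smul {g : E → F} (hg : Differentiable ℝ g) (x h : E) (t : ℝ) :
    HasDerivAt (fun s : ℝ => g (x + s • h)) (fderiv ℝ g (x + t • h) h) t :=
  (hg _).hasFDerivAt.comp_hasDerivAt t <| by
    simpa using ((hasDerivAt_id t).smul_const h).const_add x

theorem norm_sub_sub_fderiv_le_of_lipschitz_fderiv {g : E → F} {L : ℝ}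
    (hg : Differentiable ℝ g)
    (hlip : ∀ a b, ‖fderiv ℝ g a - fderiv ℝ g b‖ ≤ L * ‖a - b‖) (x h : E) :
    ‖g (x + h) - g x - fderiv ℝ g x h‖ ≤ L / 2 * ‖h‖ ^ 2 := by
  have hψ : ∀ t : ℝ, HasDerivAt (fun s : ℝ => g (x + s • h) - g x - s • fderiv ℝ g x h)
      (fderiv ℝ g (x + t • h) h - fderiv ℝ g x h) t := fun t =>
    ((hasDerivAt_comp_add_smul hg x h t).sub_const (g x)).sub
      ((hasDerivAt_id t).smul_const (fderiv ℝ g x h)) |>.congr_deriv (by rw [one_smul])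
  have hB : ∀ t : ℝ, HasDerivAt (fun s : ℝ => L / 2 * s ^ 2 * ‖h‖ ^ 2) (L * t * ‖h‖ ^ 2) t :=
    fun t => (((hasDerivAt_pow 2 t).const_mul (L / 2)).mul_const _).congr_deriv
      (by push_cast; ring)
  have hbound : ∀ t ∈ Ico (0 : ℝ) 1,
      ‖fderiv ℝ g (x + t • h) h - fderiv ℝ g x h‖ ≤ L * t * ‖h‖ ^ 2 := fun t ht => by
    calc ‖fderiv ℝ g (x + t • h) h - fderiv ℝ g x h‖
        ≤ ‖fderiv ℝ g (x + t • h) - fderiv ℝ g x‖ * ‖h‖ := by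
          rw [← sub_apply]; exact ContinuousLinearMap.le_opNorm _ _
      _ ≤ L * ‖x + t • h - x‖ * ‖h‖ := by gcongr; exact hlip _ _
      _ = L * t * ‖h‖ ^ 2 := by
          rw [add_sub_cancel_left, norm_smul, Real.norm_of_nonneg ht.1]; ring
  simpa using image_norm_le_of_norm_deriv_right_le_deriv_boundary
    (HasDerivAt.continuousOn fun t _ => hψ t) (fun t _ => (hψ t).hasDerivWithinAt)
    (by simp) hB hbound (right_mem_Icc.2 zero_le_one)

end Taylor

section Gradient

variable {E : Type*} [NormedAddCommGroup E] [InnerProductSpace ℝ E] [CompleteSpace E]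
  {f : E → ℝ}

theorem ContDiff.differentiable_gradient (hf : ContDiff ℝ 2 f) :
    Differentiable ℝ (gradient f) :=
  (InnerProductSpace.toDual ℝ E).symm.toContinuousLinearEquiv.differentiable.comp
    ((hf.fderiv_right (m := 1) le_rfl).differentiable one_ne_zero)

theorem le_add_inner_gradient_add_of_lipschitz_gradient {L : ℝ} (hf : Differentiable ℝ f)
    (hlip : ∀ a b, ‖gradient f a - gradient f b‖ ≤ L * ‖a - b‖) (x h : E) :
    f (x + h) ≤ f x + ⟪gradient f x, h⟫ + L / 2 * ‖h‖ ^ 2 := by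
  have hlip' : ∀ a b, ‖fderiv ℝ f a - fderiv ℝ f b‖ ≤ L * ‖a - b‖ := fun a b => by
    rw [← toDual_gradient, ← toDual_gradient, ← map_sub, LinearIsometryEquiv.norm_map]
    exact hlip a b
  have := norm_sub_sub_fderiv_le_of_lipschitz_fderiv hf hlip' x h
  rw [← inner_gradient_left, Real.norm_eq_abs] at this
  linarith [le_abs_self (f (x + h) - f x - ⟪gradient f x, h⟫)]

theorem le_add_inner_gradient_add_hessian_add_of_lipschitz_hessian {L : ℝ}
    (hf : Differentiable ℝ f) (hg : Differentiable ℝ (gradient f))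
    (hlip : ∀ a b, ‖fderiv ℝ (gradient f) a - fderiv ℝ (gradient f) b‖ ≤ L * ‖a - b‖)
    (x h : E) :
    f (x + h) ≤ f x + ⟪gradient f x, h⟫ + 1 / 2 * ⟪fderiv ℝ (gradient f) x h, h⟫ +
      L / 6 * ‖h‖ ^ 3 := by
  set H := fderiv ℝ (gradient f) x
  have hφ : ∀ t : ℝ, HasDerivAt (fun s : ℝ => f (x + s • h)) ⟪gradient f (x + t • h), h⟫ t :=
    fun t => (hasDerivAt_comp_add_smul hf x h t).congr_deriv (inner_gradient_left ..).symm
  have hB : ∀ t : ℝ, HasDerivAt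
      (fun s : ℝ => f x + s * ⟪gradient f x, h⟫ + s ^ 2 / 2 * ⟪H h, h⟫ + L / 6 * s ^ 3 * ‖h‖ ^ 3)
      (⟪gradient f x, h⟫ + t * ⟪H h, h⟫ + L / 2 * t ^ 2 * ‖h‖ ^ 3) t := fun t =>
    ((((hasDerivAt_id t).mul_const _).const_add _).add
      (((hasDerivAt_pow 2 t).div_const 2).mul_const _)).add
      (((hasDerivAt_pow 3 t).const_mul (L / 6)).mul_const _) |>.congr_deriv (by push_cast; ring)
  have hbound : ∀ t ∈ Ico (0 : ℝ) 1, ⟪gradient f (x + t • h), h⟫ ≤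
      ⟪gradient f x, h⟫ + t * ⟪H h, h⟫ + L / 2 * t ^ 2 * ‖h‖ ^ 3 := fun t _ => by
    have hrem : ⟪gradient f (x + t • h) - gradient f x - H (t • h), h⟫ ≤
        L / 2 * t ^ 2 * ‖h‖ ^ 3 :=
      calc _ ≤ ‖gradient f (x + t • h) - gradient f x - H (t • h)‖ * ‖h‖ :=
            real_inner_le_norm _ _
        _ ≤ L / 2 * ‖t • h‖ ^ 2 * ‖h‖ := by
            gcongr; exact norm_sub_sub_fderiv_le_of_lipschitz_fderiv hg hlip x _
        _ = L / 2 * t ^ 2 * ‖h‖ ^ 3 := by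
            rw [norm_smul, Real.norm_eq_abs, mul_pow, sq_abs]; ring
    rw [map_smul, inner_sub_left, inner_sub_left, real_inner_smul_left] at hrem
    linarith
  simpa using image_le_of_deriv_right_le_deriv_boundary
    (HasDerivAt.continuousOn fun t _ => hφ t) (fun t _ => (hφ t).hasDerivWithinAt)
    (by simp) (HasDerivAt.continuousOn fun t _ => hB t) (fun t _ => (hB t).hasDerivWithinAt)
    hbound (right_mem_Icc.2 zero_le_one)

theorem gradient_step_le {L : ℝ} (hL : 0 < L) (hf : Differentiable ℝ f)
    (hlip : ∀ a b, ‖gradient f a - gradient f b‖ ≤ L * ‖a - b‖) (x : E) :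
    f (x - (1 / L) • gradient f x) ≤ f x - ‖gradient f x‖ ^ 2 / (2 * L) := by
  have h := le_add_inner_gradient_add_of_lipschitz_gradient hf hlip x (-((1 / L) • gradient f x))
  rw [← sub_eq_add_neg, inner_neg_right, real_inner_smul_right, real_inner_self_eq_norm_sq,
    norm_neg, norm_smul, Real.norm_of_nonneg (by positivity), mul_pow] at h
  have hstep : -(1 / L * ‖gradient f x‖ ^ 2) + L / 2 * ((1 / L) ^ 2 * ‖gradient f x‖ ^ 2) =
      -(‖gradient f x‖ ^ 2 / (2 * L)) := by
    field_simp; ring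
  linarith

theorem negCurvature_step_le {L : ℝ} (hL : 0 < L) (hf : Differentiable ℝ f)
    (hg : Differentiable ℝ (gradient f))
    (hlip : ∀ a b, ‖fderiv ℝ (gradient f) a - fderiv ℝ (gradient f) b‖ ≤ L * ‖a - b‖)
    {x v : E} (hv : ‖v‖ = 1) (hq : ⟪fderiv ℝ (gradient f) x v, v⟫ ≤ 0) :
    f (x - ((2 * |⟪fderiv ℝ (gradient f) x v, v⟫| / L) * sgn ⟪gradient f x, v⟫) • v) ≤
      f x - 2 * |⟪fderiv ℝ (gradient f) x v, v⟫| ^ 3 / (3 * L ^ 2) := by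
  set A := |⟪fderiv ℝ (gradient f) x v, v⟫|
  have hqA : ⟪fderiv ℝ (gradient f) x v, v⟫ = -A := by
    rw [show A = _ from abs_of_nonpos hq, neg_neg]
  set η := 2 * A / L
  set s := sgn ⟪gradient f x, v⟫
  have h := le_add_inner_gradient_add_hessian_add_of_lipschitz_hessian hf hg hlip x
    (-((η * s) • v))
  rw [← sub_eq_add_neg, inner_neg_right, real_inner_smul_right, mul_assoc, sgn_mul_self,
    map_neg, map_smul, inner_neg_neg, real_inner_smul_left, real_inner_smul_right, hqA,
    norm_neg, norm_smul, hv, Real.norm_eq_abs, abs_mul, abs_sgn,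
    abs_of_nonneg (by positivity : 0 ≤ η)] at h
  have hstep : 1 / 2 * (η * s * (η * s * -A)) + L / 6 * (η * 1 * 1) ^ 3 =
      -(2 * A ^ 3 / (3 * L ^ 2)) := by
    rw [show η * s * (η * s * -A) = -(η ^ 2 * A) * s ^ 2 by ring, sq_sgn]
    simp only [η]
    field_simp
    ring
  linarith [mul_nonneg (by positivity : 0 ≤ η) (abs_nonneg ⟪gradient f x, v⟫)]

noncomputable def ncgStep (f : E → ℝ) (L1 L2 : ℝ) (x v : E) : E :=
  if 2 * |⟪fderiv ℝ (gradient f) x v, v⟫| ^ 3 / (3 * L2 ^ 2) > ‖gradient f x‖ ^ 2 / (2 * L1) then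
    x - ((2 * |⟪fderiv ℝ (gradient f) x v, v⟫| / L2) * sgn ⟪gradient f x, v⟫) • v
  else
    x - (1 / L1) • gradient f x

theorem ncgStep_le {L1 L2 : ℝ} (hL1 : 0 < L1) (hL2 : 0 < L2) (hf : Differentiable ℝ f)
    (hg : Differentiable ℝ (gradient f))
    (hglip : ∀ a b, ‖gradient f a - gradient f b‖ ≤ L1 * ‖a - b‖)
    (hHlip : ∀ a b, ‖fderiv ℝ (gradient f) a - fderiv ℝ (gradient f) b‖ ≤ L2 * ‖a - b‖)
    {x v : E} (hv : ‖v‖ = 1) (hq : ⟪fderiv ℝ (gradient f) x v, v⟫ ≤ 0) :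
    f (ncgStep f L1 L2 x v) ≤ f x - max (2 * |⟪fderiv ℝ (gradient f) x v, v⟫| ^ 3 / (3 * L2 ^ 2))
      (‖gradient f x‖ ^ 2 / (2 * L1)) := by
  unfold ncgStep
  split_ifs with h
  · rw [max_eq_left h.le]
    exact negCurvature_step_le hL2 hf hg hHlip hv hq
  · rw [max_eq_right (not_lt.1 h)]
    exact gradient_step_le hL1 hf hglip x

end Gradient

theorem one_le_max_mul_max_of_le_or_lt {L1 L2 ε₁ ε₂ q g : ℝ} (hL1 : 0 < L1) (hL2 : 0 < L2)
    (hε₁ : 0 < ε₁) (hε₂ : 0 < ε₂) (h : q ≤ -ε₂ / 2 ∨ ε₁ < g) :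
    1 ≤ max (12 * L2 ^ 2 / ε₂ ^ 3) (2 * L1 / ε₁ ^ 2) *
      max (2 * |q| ^ 3 / (3 * L2 ^ 2)) (g ^ 2 / (2 * L1)) := by
  rcases h with hq | hg
  · have hq' : ε₂ / 2 ≤ |q| := le_abs.2 (Or.inr (by linarith))
    calc (1 : ℝ) = 12 * L2 ^ 2 / ε₂ ^ 3 * (2 * (ε₂ / 2) ^ 3 / (3 * L2 ^ 2)) := by
          field_simp; ring
      _ ≤ _ := mul_le_mul (le_max_left _ _)
          (le_max_of_le_left (by gcongr)) (by positivity) (by positivity)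
  · calc (1 : ℝ) = 2 * L1 / ε₁ ^ 2 * (ε₁ ^ 2 / (2 * L1)) := by field_simp
      _ ≤ _ := mul_le_mul (le_max_right _ _)
          (le_max_of_le_right (by gcongr)) (by positivity) (by positivity)

theorem le_add_mul_sub_of_one_le_mul_sub {a : ℕ → ℝ} {c : ℝ} {m n : ℕ} (hmn : m ≤ n)
    (h : ∀ j, m ≤ j → j < n → 1 ≤ c * (a j - a (j + 1))) : (n : ℝ) ≤ m + c * (a m - a n) := by
  induction n, hmn using Nat.le_induction with
  | base => simp
  | succ n hmn ih =>
    have hprev := ih fun j hj hjn => h j hj (hjn.trans n.lt_succ_self)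
    have hlast := h n hmn n.lt_succ_self
    push_cast
    linarith

theorem exists_le_of_one_le_mul_sub {a : ℕ → ℝ} {c Δ : ℝ} {P : ℕ → Prop} {m : ℕ} (hc : 0 ≤ c)
    (hΔ : ∀ n, a m - a n ≤ Δ) (h : ∀ j, m ≤ j → ¬P j → 1 ≤ c * (a j - a (j + 1))) :
    ∃ n, m ≤ n ∧ P n := by
  by_contra! hnever
  obtain ⟨k, hk⟩ := exists_nat_gt (c * Δ)
  have hcount := le_add_mul_sub_of_one_le_mul_sub (m.le_add_right (k + 1)) fun j hj _ =>
    h j hj (hnever j hj)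
  have := mul_le_mul_of_nonneg_left (hΔ (m + (k + 1))) hc
  push_cast at hcount
  linarith

/-- Theorem on NCG-A1: convergence guarantee of the NCG-A1 algorithm. -/
theorem NCG_A1_guarantee {d : ℕ}
    (f : EuclideanSpace ℝ (Fin d) → ℝ) (L1 L2 ε₁ ε₂ Δ : ℝ)
    (hL1 : 0 < L1) (hL2 : 0 < L2) (hε₁ : 0 < ε₁) (hε₂ : 0 < ε₂)
    (hf : ContDiff ℝ 2 f)
    (hglip : ∀ a b : EuclideanSpace ℝ (Fin d),
      ‖gradient f a - gradient f b‖ ≤ L1 * ‖a - b‖)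
    (hHlip : ∀ a b : EuclideanSpace ℝ (Fin d),
      ‖fderiv ℝ (gradient f) a - fderiv ℝ (gradient f) b‖ ≤ L2 * ‖a - b‖)
    (x₀ : EuclideanSpace ℝ (Fin d))
    (hΔ : ∀ z : EuclideanSpace ℝ (Fin d), f x₀ - f z ≤ Δ)
    (x v : ℕ → EuclideanSpace ℝ (Fin d))
    (hx1 : x 1 = x₀)
    (hv : ∀ j : ℕ, 1 ≤ j → ‖v j‖ = 1)
    (hvneg : ∀ j : ℕ, 1 ≤ j → ⟪(fderiv ℝ (gradient f) (x j)) (v j), v j⟫ ≤ 0)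
    (hmin : ∀ j : ℕ, 1 ≤ j → ∀ u : EuclideanSpace ℝ (Fin d), ‖u‖ = 1 →
      ⟪(fderiv ℝ (gradient f) (x j)) u, u⟫ ≥
        ⟪(fderiv ℝ (gradient f) (x j)) (v j), v j⟫ -
          max ε₂ ‖gradient f (x j)‖ / 2)
    (hupd : ∀ j : ℕ, 1 ≤ j →
      x (j + 1) =
        if 2 * |⟪(fderiv ℝ (gradient f) (x j)) (v j), v j⟫| ^ 3 / (3 * L2 ^ 2) >
            ‖gradient f (x j)‖ ^ 2 / (2 * L1) then
          x j - ((2 * |⟪(fderiv ℝ (gradient f) (x j)) (v j), v j⟫| / L2) *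
            sgn ⟪gradient f (x j), v j⟫) • v j
        else
          x j - (1 / L1) • gradient f (x j)) :
    ∃ jstar : ℕ, 1 ≤ jstar ∧
      (⟪(fderiv ℝ (gradient f) (x jstar)) (v jstar), v jstar⟫ > -ε₂ / 2 ∧
        ‖gradient f (x jstar)‖ ≤ ε₁) ∧
      (∀ i : ℕ, 1 ≤ i → i < jstar →
        ¬(⟪(fderiv ℝ (gradient f) (x i)) (v i), v i⟫ > -ε₂ / 2 ∧
          ‖gradient f (x i)‖ ≤ ε₁)) ∧
      (jstar : ℝ) ≤
        1 + max (12 * L2 ^ 2 / ε₂ ^ 3) (2 * L1 / ε₁ ^ 2) * (f (x 1) - f (x jstar)) ∧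
      (jstar : ℝ) ≤ 1 + max (12 * L2 ^ 2 / ε₂ ^ 3) (2 * L1 / ε₁ ^ 2) * Δ ∧
      ∀ u : EuclideanSpace ℝ (Fin d), ‖u‖ = 1 →
        ⟪(fderiv ℝ (gradient f) (x jstar)) u, u⟫ ≥ -(max ε₂ ε₁) := by
  set M := max (12 * L2 ^ 2 / ε₂ ^ 3) (2 * L1 / ε₁ ^ 2)
  have hM : 0 ≤ M := le_max_of_le_left (by positivity)
  let halts j := ⟪(fderiv ℝ (gradient f) (x j)) (v j), v j⟫ > -ε₂ / 2 ∧ ‖gradient f (x j)‖ ≤ ε₁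
  have hprogress : ∀ j, 1 ≤ j → ¬halts j → 1 ≤ M * (f (x j) - f (x (j + 1))) := by
    intro j hj hrunning
    have hdec := ncgStep_le hL1 hL2 (hf.differentiable two_ne_zero) hf.differentiable_gradient
      hglip hHlip (hv j hj) (hvneg j hj)
    rw [← show x (j + 1) = ncgStep f L1 L2 (x j) (v j) from hupd j hj] at hdec
    calc 1 ≤ M * _ := one_le_max_mul_max_of_le_or_lt hL1 hL2 hε₁ hε₂
          ((not_and_or.1 hrunning).imp not_lt.1 not_le.1)
      _ ≤ _ := by gcongr; linarith
  have hΔ' : ∀ n, f (x 1) - f (x n) ≤ Δ := fun n => hx1 ▸ hΔ (x n)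
  have hhalts : ∃ n, 1 ≤ n ∧ halts n := exists_le_of_one_le_mul_sub hM hΔ' hprogress
  obtain ⟨hstart, hhalt⟩ := Nat.find_spec hhalts
  have hfirst : ∀ i, 1 ≤ i → i < Nat.find hhalts → ¬halts i :=
    fun i hi hlt hi' => Nat.find_min hhalts hlt ⟨hi, hi'⟩
  have hbound : (Nat.find hhalts : ℝ) ≤ 1 + M * (f (x 1) - f (x (Nat.find hhalts))) :=
    mod_cast le_add_mul_sub_of_one_le_mul_sub hstart fun j hj hjn =>
      hprogress j hj (hfirst j hj hjn)
  refine ⟨_, hstart, hhalt, hfirst, hbound, hbound.trans (by gcongr; exact hΔ' _), fun u hu => ?_⟩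
  linarith [hmin _ hstart u hu, max_le_max_left ε₂ hhalt.2, le_max_left ε₂ ε₁, hhalt.1]
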